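/- Fix ρ ∈ (0,1) and d ∈ (0,1) with d ≠ 1−ρ. For each integer m ≥ 1 define δ^{(m)}(d) as follows: δ^{(m)}(d) = 0 if d ≤ (m−1)(1−ρ)/m; δ^{(m)}(d) = (1−ρ−m(1−ρ−d))/(2m(1−ρ−d)) + (1/2)·log(m(1−ρ−d)/(1−ρ)) if (m−1)(1−ρ)/m < d < 1−ρ; and δ^{(m)}(d) = (1−ρ)(1−d)/(2mρ(d−1+ρ)) if 1−ρ < d < 1. Then the sequence m ↦ δ^{(m)}(d) is nonincreasing in m and converges to 0 as m → ∞. -/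

import Mathlib

open Filter

/-- The asymptotic gap `δ^{(m)}(d)` between the Berger–Tung upper bound and the
centralized rate-distortion function. -/
noncomputable def deltaGap (ρ d : ℝ) (m : ℕ) : ℝ :=
  if d ≤ ((m : ℝ) - 1) * (1 - ρ) / (m : ℝ) then 0
  else if d < 1 - ρ then
    (1 - ρ - (m : ℝ) * (1 - ρ - d)) / (2 * (m : ℝ) * (1 - ρ - d)) +
      (1 / 2) * Real.log ((m : ℝ) * (1 - ρ - d) / (1 - ρ))
  else (1 - ρ) * (1 - d) / (2 * (m : ℝ) * ρ * (d - 1 + ρ))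

/-!
For `d < 1 - ρ` one has `δ^{(m)}(d) = g (min 1 (m (1-ρ-d)/(1-ρ)))` with
`g x = (1-x)/(2x) + ½ log x`. On `(0,1]` the function `g` decreases to `g 1 = 0`: for
`0 < x ≤ y ≤ 1` the increment `log y - log x ≤ (y-x)/x ≤ (y-x)/(xy)` is at most twice the drop
of `(1-x)/(2x)`. The argument of `g` increases with `m` and equals `1` for all large `m`.
For `d > 1 - ρ` the gap is `C / m` with a constant `C ≥ 0`.
-/

namespace DeltaGap

noncomputable def profile (x : ℝ) : ℝ := (1 - x) / (2 * x) + 1 / 2 * Real.log x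

@[simp]
lemma profile_one : profile 1 = 0 := by
  simp [profile]

lemma antitoneOn_profile : AntitoneOn profile (Set.Ioc 0 1) := by
  rintro x ⟨hx, -⟩ y ⟨hy, hy₁⟩ hxy
  have hlog : Real.log y - Real.log x ≤ (y - x) / x := by
    rw [← Real.log_div hy.ne' hx.ne', sub_div, div_self hx.ne']
    exact Real.log_le_sub_one_of_pos (by positivity)
  have hdiv : (y - x) / x ≤ (y - x) / (x * y) :=
    div_le_div_of_nonneg_left (by linarith) (by positivity) (by nlinarith)
  have hrat : (1 - x) / (2 * x) - (1 - y) / (2 * y) = (y - x) / (x * y) / 2 := by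
    field_simp
    ring
  simp only [profile]
  linarith

section

variable {ρ d : ℝ}

lemma one_le_div_iff_le_threshold (hρ : ρ < 1) {m : ℕ} (hm : 1 ≤ m) :
    1 ≤ m * (1 - ρ - d) / (1 - ρ) ↔ d ≤ ((m : ℝ) - 1) * (1 - ρ) / m := by
  have hm₀ : (0 : ℝ) < m := by exact_mod_cast hm
  rw [one_le_div (by linarith), le_div_iff₀ hm₀]
  constructor <;> intro h <;> linarith

lemma deltaGap_eq_profile (hρ : ρ < 1) (hd : d < 1 - ρ) {m : ℕ} (hm : 1 ≤ m) :
    deltaGap ρ d m = profile (min 1 (m * (1 - ρ - d) / (1 - ρ))) := by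
  by_cases h : 1 ≤ m * (1 - ρ - d) / (1 - ρ)
  · rw [deltaGap, if_pos ((one_le_div_iff_le_threshold hρ hm).1 h), min_eq_left h,
      profile_one]
  · rw [deltaGap, if_neg (mt (one_le_div_iff_le_threshold hρ hm).2 h), if_pos hd]
    have hm₀ : (0 : ℝ) < m := by exact_mod_cast hm
    have hs : 0 < 1 - ρ := by linarith
    have ht : 0 < 1 - ρ - d := by linarith
    rw [min_eq_right (not_le.1 h).le, profile]
    congr 1
    field_simp

lemma deltaGap_eq_div (hρ : ρ < 1) (hd : 1 - ρ < d) {m : ℕ} (hm : 1 ≤ m) :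
    deltaGap ρ d m = (1 - ρ) * (1 - d) / (2 * ρ * (d - 1 + ρ)) / m := by
  have hm₀ : (0 : ℝ) < m := by exact_mod_cast hm
  have hbelow : ¬ d ≤ ((m : ℝ) - 1) * (1 - ρ) / m := by
    rw [not_le, div_lt_iff₀ hm₀]
    nlinarith
  rw [deltaGap, if_neg hbelow, if_neg hd.not_gt, div_div]
  congr 1
  ring

lemma antitoneOn_deltaGap_of_lt (hρ : ρ < 1) (hd : d < 1 - ρ) :
    AntitoneOn (deltaGap ρ d) (Set.Ici 1) := by
  have hs : 0 < 1 - ρ := by linarith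
  have ht : 0 < 1 - ρ - d := by linarith
  intro a ha b hb hab
  have hab' : (a : ℝ) ≤ b := by exact_mod_cast hab
  have ha₀ : (0 : ℝ) < a := by exact_mod_cast ha
  have hb₀ : (0 : ℝ) < b := by exact_mod_cast hb
  rw [deltaGap_eq_profile hρ hd ha, deltaGap_eq_profile hρ hd hb]
  refine antitoneOn_profile ⟨by positivity, min_le_left _ _⟩ ⟨by positivity, min_le_left _ _⟩ ?_
  gcongr

lemma tendsto_deltaGap_of_lt (hρ : ρ < 1) (hd : d < 1 - ρ) :
    Tendsto (fun m : ℕ => deltaGap ρ d m) atTop (nhds 0) := by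
  have hs : 0 < 1 - ρ := by linarith
  have ht : 0 < 1 - ρ - d := by linarith
  have harg : Tendsto (fun m : ℕ => (m : ℝ) * (1 - ρ - d) / (1 - ρ)) atTop atTop :=
    (tendsto_natCast_atTop_atTop.atTop_mul_const ht).atTop_div_const hs
  refine tendsto_const_nhds.congr' ?_
  filter_upwards [eventually_ge_atTop 1, harg.eventually_ge_atTop 1] with m hm hlarge
  rw [deltaGap_eq_profile hρ hd hm, min_eq_left hlarge, profile_one]

lemma antitoneOn_deltaGap_of_gt (hρ₁ : 0 < ρ) (hρ₂ : ρ < 1) (hd₁ : 1 - ρ < d) (hd₂ : d < 1) :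
    AntitoneOn (deltaGap ρ d) (Set.Ici 1) := by
  intro a ha b hb hab
  have hab' : (a : ℝ) ≤ b := by exact_mod_cast hab
  have ha₀ : (0 : ℝ) < a := by exact_mod_cast ha
  have hC : 0 ≤ (1 - ρ) * (1 - d) / (2 * ρ * (d - 1 + ρ)) := by
    apply div_nonneg <;> nlinarith
  rw [deltaGap_eq_div hρ₂ hd₁ ha, deltaGap_eq_div hρ₂ hd₁ hb]
  gcongr

lemma tendsto_deltaGap_of_gt (hρ : ρ < 1) (hd : 1 - ρ < d) :
    Tendsto (fun m : ℕ => deltaGap ρ d m) atTop (nhds 0) := by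
  refine (tendsto_const_div_atTop_nhds_zero_nat
    ((1 - ρ) * (1 - d) / (2 * ρ * (d - 1 + ρ)))).congr' ?_
  filter_upwards [eventually_ge_atTop 1] with m hm
  rw [deltaGap_eq_div hρ hd hm]

end

end DeltaGap

open DeltaGap in
theorem stmt_19_general (ρ d : ℝ) (hρ₁ : 0 < ρ) (hρ₂ : ρ < 1)
    (hd₂ : d < 1) (hd₃ : d ≠ 1 - ρ) :
    AntitoneOn (deltaGap ρ d) (Set.Ici 1) ∧
    Tendsto (fun m : ℕ => deltaGap ρ d m) atTop (nhds 0) := by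
  rcases hd₃.lt_or_gt with hd | hd
  · exact ⟨antitoneOn_deltaGap_of_lt hρ₂ hd, tendsto_deltaGap_of_lt hρ₂ hd⟩
  · exact ⟨antitoneOn_deltaGap_of_gt hρ₁ hρ₂ hd hd₂, tendsto_deltaGap_of_gt hρ₂ hd⟩

/-- for ρ ∈ (0,1) and `d ∈ (0,1)` with `d ≠ 1-ρ`, the sequence
`m ↦ δ^{(m)}(d)` is nonincreasing on `m ≥ 1` and converges to `0` as `m → ∞`. -/
theorem stmt_19 (ρ d : ℝ) (hρ₁ : 0 < ρ) (hρ₂ : ρ < 1)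
    (hd₁ : 0 < d) (hd₂ : d < 1) (hd₃ : d ≠ 1 - ρ) :
    AntitoneOn (deltaGap ρ d) (Set.Ici 1) ∧
    Tendsto (fun m : ℕ => deltaGap ρ d m) atTop (nhds 0) :=
  stmt_19_general ρ d hρ₁ hρ₂ hd₂ hd₃
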